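/- Let 𝒯 be a monoid of transformations of a nonempty set X such that 𝒯* has the Moore–Smith property, and let L be a weakly 𝒯-invariant coherent lower prevision on all gambles on X (L(f∘T) ≥ L(f) for all gambles f, T ∈ 𝒯). Then for every gamble f the net (L(T*f))_{T*∈𝒯*}, directed by the successor relation, converges to the real number Q(f) := sup_{T*∈𝒯*} L(T*f), and moreover Q(f) = sup { L( (1/n) Σ_{k=1}^n f∘T_k ) : n ≥ 1, T₁,…,T_n ∈ 𝒯 }. The functional Q is the point-wise smallest strongly 𝒯-invariant coherent lower prevision on all gambles that dominates L (i.e. Q is a coherent lower prevision with Q(f − f∘T) ≥ 0 and Q(f∘T − f) ≥ 0 for all gambles f and T ∈ 𝒯, Q ≥ L point-wise, and every coherent lower prevision with these properties dominates Q). -/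

import Mathlib

def IsGamble {X : Type*} (f : X → ℝ) : Prop :=
  BddAbove (Set.range f) ∧ BddBelow (Set.range f)

def IsCoherentLowerPrevision {X : Type*} (L : (X → ℝ) → ℝ) : Prop :=
  (∀ f : X → ℝ, IsGamble f → sInf (Set.range f) ≤ L f) ∧
  (∀ f g : X → ℝ, IsGamble f → IsGamble g → L f + L g ≤ L (f + g)) ∧
  (∀ f : X → ℝ, IsGamble f → ∀ c : ℝ, 0 ≤ c → L (c • f) = c * L f)

def IsCoherentPrevision {X : Type*} (P : (X → ℝ) → ℝ) : Prop :=
  (∀ f g : X → ℝ, IsGamble f → IsGamble g → P (f + g) = P f + P g) ∧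
  (∀ f : X → ℝ, IsGamble f → sInf (Set.range f) ≤ P f)

def IsTransformationMonoid {X : Type*} (𝒯 : Set (X → X)) : Prop :=
  id ∈ 𝒯 ∧ ∀ S ∈ 𝒯, ∀ T ∈ 𝒯, S ∘ T ∈ 𝒯

def Dominating {X : Type*} (L : (X → ℝ) → ℝ) : Set ((X → ℝ) → ℝ) :=
  {P | IsCoherentPrevision P ∧ ∀ f : X → ℝ, IsGamble f → L f ≤ P f}

def ConvMix {X : Type*} (𝒯 : Set (X → X)) : Set ((X → ℝ) → (X → ℝ)) :=
  {S | ∃ (n : ℕ) (lam : Fin n → ℝ) (Ts : Fin n → X → X),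
    (∀ k, 0 ≤ lam k) ∧ (∑ k, lam k = 1) ∧ (∀ k, Ts k ∈ 𝒯) ∧
    S = fun f x => ∑ k, lam k * f (Ts k x)}

def Succ {X : Type*} (𝒯 : Set (X → X)) (S₂ S₁ : (X → ℝ) → (X → ℝ)) : Prop :=
  ∃ S ∈ ConvMix 𝒯, S₂ = S ∘ S₁

def MooreSmith {X : Type*} (𝒯 : Set (X → X)) : Prop :=
  ∀ S₁ ∈ ConvMix 𝒯, ∀ S₂ ∈ ConvMix 𝒯,
    ∃ S ∈ ConvMix 𝒯, Succ 𝒯 S S₁ ∧ Succ 𝒯 S S₂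

noncomputable def Qfun {X : Type*} (𝒯 : Set (X → X)) (L : (X → ℝ) → ℝ)
    (f : X → ℝ) : ℝ :=
  sSup {r : ℝ | ∃ S ∈ ConvMix 𝒯, r = L (S f)}


/-!
Mixing with an element of `𝒯*` can only increase `L`: weak invariance and superadditivity give
`L (∑ λₖ f ∘ Tₖ) ≥ ∑ λₖ L (f ∘ Tₖ) ≥ L f`. Every successor of `S₀` is a further mixture of `S₀`, so
`L (S f)` increases along the successor order and converges to its supremum `Q f`. Given
near-optimal mixtures for `f` and for `g`, the Moore–Smith property provides one mixture that is
near-optimal for both, which makes `Q` superadditive. The Cesàro averages of `f - f ∘ T` along the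
iterates of `T` telescope to `O(1/K)`, which gives strong invariance. A strongly invariant `M`
satisfies `M (f - S f) ≥ 0`, hence `M f ≥ M (S f) ≥ L (S f)`, which gives minimality. Finally,
rounding the weights of a mixture down to multiples of `1/K` and putting the remaining weight on
the identity moves `S f` by `O(1/K)` in sup norm, and `L` is `1`-Lipschitz for the sup norm, so
uniform averages already reach the supremum.
-/

open Finset Filter Topology Pointwise

section

variable {X : Type*}

theorem isGamble_iff_exists_abs_le {f : X → ℝ} : IsGamble f ↔ ∃ M, ∀ x, |f x| ≤ M := by
  rw [IsGamble, and_comm, ← isBounded_iff_bddBelow_bddAbove, isBounded_iff_forall_norm_le]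
  simp [Real.norm_eq_abs]

theorem isGamble_zero : IsGamble (0 : X → ℝ) :=
  isGamble_iff_exists_abs_le.2 ⟨0, by simp⟩

namespace IsGamble

variable {f g : X → ℝ}

theorem add (hf : IsGamble f) (hg : IsGamble g) : IsGamble (f + g) := by
  obtain ⟨M, hM⟩ := isGamble_iff_exists_abs_le.1 hf
  obtain ⟨N, hN⟩ := isGamble_iff_exists_abs_le.1 hg
  exact isGamble_iff_exists_abs_le.2
    ⟨M + N, fun x => (abs_add_le _ _).trans (add_le_add (hM x) (hN x))⟩

theorem const_smul (hf : IsGamble f) (c : ℝ) : IsGamble (c • f) := by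
  obtain ⟨M, hM⟩ := isGamble_iff_exists_abs_le.1 hf
  exact isGamble_iff_exists_abs_le.2 ⟨|c| * M, fun x => by
    simpa [abs_mul] using mul_le_mul_of_nonneg_left (hM x) (abs_nonneg c)⟩

theorem neg (hf : IsGamble f) : IsGamble (-f) := by
  simpa using hf.const_smul (-1)

theorem sub (hf : IsGamble f) (hg : IsGamble g) : IsGamble (f - g) := by
  simpa [sub_eq_add_neg] using hf.add hg.neg

theorem comp (hf : IsGamble f) (T : X → X) : IsGamble (f ∘ T) := by
  obtain ⟨M, hM⟩ := isGamble_iff_exists_abs_le.1 hf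
  exact isGamble_iff_exists_abs_le.2 ⟨M, fun x => hM (T x)⟩

theorem sum {ι : Type*} (s : Finset ι) {F : ι → X → ℝ} (hF : ∀ i, IsGamble (F i)) :
    IsGamble (∑ i ∈ s, F i) := by
  classical
  induction s using Finset.induction_on with
  | empty => simpa using isGamble_zero
  | insert i s hi ih => rw [sum_insert hi]; exact (hF i).add ih

end IsGamble

namespace IsCoherentLowerPrevision

variable {L : (X → ℝ) → ℝ} (hL : IsCoherentLowerPrevision L)
include hL

theorem map_zero : L 0 = 0 := by
  simpa using hL.2.2 0 isGamble_zero 0 le_rfl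

theorem le_apply [Nonempty X] {g : X → ℝ} (hg : IsGamble g) {a : ℝ} (ha : ∀ x, a ≤ g x) :
    a ≤ L g :=
  (le_csInf (Set.range_nonempty g) (Set.forall_mem_range.2 ha)).trans (hL.1 g hg)

theorem apply_le_add [Nonempty X] {g h : X → ℝ} (hg : IsGamble g) (hh : IsGamble h) {c : ℝ}
    (hc : ∀ x, g x ≤ h x + c) : L g ≤ L h + c := by
  have hsup := hL.2.1 g (h - g) hg (hh.sub hg)
  have hlow : -c ≤ L (h - g) := hL.le_apply (hh.sub hg) fun x => by simp only [Pi.sub_apply]; linarith [hc x]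
  rw [add_sub_cancel] at hsup
  linarith

theorem apply_le [Nonempty X] {g : X → ℝ} (hg : IsGamble g) {b : ℝ} (hb : ∀ x, g x ≤ b) :
    L g ≤ b := by
  simpa [hL.map_zero] using hL.apply_le_add hg isGamble_zero (c := b) (by simpa using hb)

theorem sum_le_apply_sum {ι : Type*} (s : Finset ι) {g : ι → X → ℝ}
    (hg : ∀ i, IsGamble (g i)) : ∑ i ∈ s, L (g i) ≤ L (∑ i ∈ s, g i) := by
  classical
  induction s using Finset.induction_on with
  | empty => simp [hL.map_zero]
  | insert i s hi ih =>
    rw [sum_insert hi, sum_insert hi]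
    exact (add_le_add_right ih _).trans (hL.2.1 _ _ (hg i) (IsGamble.sum s hg))

theorem le_apply_sum_smul {ι : Type*} [Fintype ι] {w : ι → ℝ} (hw0 : ∀ i, 0 ≤ w i)
    (hw1 : ∑ i, w i = 1) {g : ι → X → ℝ} (hg : ∀ i, IsGamble (g i)) {c : ℝ}
    (hc : ∀ i, c ≤ L (g i)) : c ≤ L (∑ i, w i • g i) :=
  calc c = ∑ i, w i * c := by rw [← sum_mul, hw1, one_mul]
    _ ≤ ∑ i, w i * L (g i) := sum_le_sum fun i _ => mul_le_mul_of_nonneg_left (hc i) (hw0 i)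
    _ = ∑ i, L (w i • g i) := sum_congr rfl fun i _ => (hL.2.2 _ (hg i) _ (hw0 i)).symm
    _ ≤ L (∑ i, w i • g i) := hL.sum_le_apply_sum _ fun i => (hg i).const_smul _

end IsCoherentLowerPrevision

section ConvMix

variable {𝒯 : Set (X → X)} {S : (X → ℝ) → X → ℝ}

theorem exists_eq_sum_smul_comp_of_mem_convMix (hS : S ∈ ConvMix 𝒯) :
    ∃ (n : ℕ) (w : Fin n → ℝ) (T : Fin n → X → X), (∀ k, 0 ≤ w k) ∧ ∑ k, w k = 1 ∧
      (∀ k, T k ∈ 𝒯) ∧ ∀ f, S f = ∑ k, w k • (f ∘ T k) := by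
  obtain ⟨n, w, T, hw0, hw1, hT, rfl⟩ := hS
  exact ⟨n, w, T, hw0, hw1, hT, fun f => by ext x; simp⟩

theorem abs_apply_le_of_mem_convMix (hS : S ∈ ConvMix 𝒯) {f : X → ℝ} {M : ℝ}
    (hM : ∀ x, |f x| ≤ M) (x : X) : |S f x| ≤ M := by
  obtain ⟨n, w, T, hw0, hw1, -, rfl⟩ := hS
  calc |∑ k, w k * f (T k x)| ≤ ∑ k, |w k * f (T k x)| := abs_sum_le_sum_abs _ _
    _ ≤ ∑ k, w k * M := sum_le_sum fun k _ => by
      rw [abs_mul, abs_of_nonneg (hw0 k)]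
      exact mul_le_mul_of_nonneg_left (hM _) (hw0 k)
    _ = M := by rw [← sum_mul, hw1, one_mul]

theorem isGamble_apply_of_mem_convMix (hS : S ∈ ConvMix 𝒯) {f : X → ℝ} (hf : IsGamble f) :
    IsGamble (S f) := by
  obtain ⟨M, hM⟩ := isGamble_iff_exists_abs_le.1 hf
  exact isGamble_iff_exists_abs_le.2 ⟨M, abs_apply_le_of_mem_convMix hS hM⟩

theorem map_add_of_mem_convMix (hS : S ∈ ConvMix 𝒯) (f g : X → ℝ) :
    S (f + g) = S f + S g := by
  obtain ⟨n, w, T, -, -, -, rfl⟩ := hS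
  ext x
  simp [sum_add_distrib, mul_add]

theorem map_smul_of_mem_convMix (hS : S ∈ ConvMix 𝒯) (c : ℝ) (f : X → ℝ) :
    S (c • f) = c • S f := by
  obtain ⟨n, w, T, -, -, -, rfl⟩ := hS
  ext x
  simp [mul_sum, mul_left_comm]

theorem id_mem_convMix (hid : id ∈ 𝒯) : id ∈ ConvMix 𝒯 :=
  ⟨1, fun _ => 1, fun _ => id, fun _ => zero_le_one, by simp, fun _ => hid, by ext f x; simp⟩

noncomputable def uniformMix {n : ℕ} (Ts : Fin (n + 1) → X → X) (f : X → ℝ) : X → ℝ :=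
  fun x => (∑ k, f (Ts k x)) / ((n : ℝ) + 1)

theorem uniformMix_mem_convMix {n : ℕ} {Ts : Fin (n + 1) → X → X} (hTs : ∀ k, Ts k ∈ 𝒯) :
    uniformMix Ts ∈ ConvMix 𝒯 := by
  refine ⟨n + 1, fun _ => 1 / ((n : ℝ) + 1), Ts, fun _ => by positivity, ?_, hTs, ?_⟩
  · simp only [sum_const, card_univ, Fintype.card_fin, nsmul_eq_mul, Nat.cast_add, Nat.cast_one]
    field_simp
  · ext f x
    simp [uniformMix, div_eq_inv_mul, mul_sum]

theorem apply_le_apply_of_mem_convMix {L : (X → ℝ) → ℝ} (hL : IsCoherentLowerPrevision L)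
    (hweak : ∀ f : X → ℝ, IsGamble f → ∀ T ∈ 𝒯, L f ≤ L (f ∘ T)) (hS : S ∈ ConvMix 𝒯)
    {f : X → ℝ} (hf : IsGamble f) : L f ≤ L (S f) := by
  obtain ⟨n, w, T, hw0, hw1, hT, hrep⟩ := exists_eq_sum_smul_comp_of_mem_convMix hS
  rw [hrep]
  exact hL.le_apply_sum_smul hw0 hw1 (fun k => hf.comp _) fun k => hweak f hf _ (hT k)

end ConvMix

section Qfun

variable {𝒯 : Set (X → X)} {L : (X → ℝ) → ℝ} {f : X → ℝ}

theorem Qfun_set_nonempty (hid : id ∈ 𝒯) : {r | ∃ S ∈ ConvMix 𝒯, r = L (S f)}.Nonempty :=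
  ⟨L f, id, id_mem_convMix hid, rfl⟩

theorem bddAbove_Qfun_set [Nonempty X] (hL : IsCoherentLowerPrevision L) (hf : IsGamble f) :
    BddAbove {r | ∃ S ∈ ConvMix 𝒯, r = L (S f)} := by
  obtain ⟨M, hM⟩ := isGamble_iff_exists_abs_le.1 hf
  refine ⟨M, ?_⟩
  rintro _ ⟨S, hS, rfl⟩
  exact hL.apply_le (isGamble_apply_of_mem_convMix hS hf) fun x =>
    (abs_le.1 (abs_apply_le_of_mem_convMix hS hM x)).2

theorem apply_le_Qfun [Nonempty X] (hL : IsCoherentLowerPrevision L) (hf : IsGamble f)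
    {S : (X → ℝ) → X → ℝ} (hS : S ∈ ConvMix 𝒯) : L (S f) ≤ Qfun 𝒯 L f :=
  le_csSup (bddAbove_Qfun_set hL hf) ⟨S, hS, rfl⟩

theorem Qfun_le (hid : id ∈ 𝒯) {b : ℝ} (h : ∀ S ∈ ConvMix 𝒯, L (S f) ≤ b) : Qfun 𝒯 L f ≤ b :=
  csSup_le (Qfun_set_nonempty hid) (by rintro _ ⟨S, hS, rfl⟩; exact h S hS)

theorem le_Qfun [Nonempty X] (hL : IsCoherentLowerPrevision L) (hid : id ∈ 𝒯)
    (hf : IsGamble f) : L f ≤ Qfun 𝒯 L f :=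
  apply_le_Qfun hL hf (id_mem_convMix hid)

theorem Qfun_smul (hL : IsCoherentLowerPrevision L) (hf : IsGamble f) {c : ℝ} (hc : 0 ≤ c) :
    Qfun 𝒯 L (c • f) = c * Qfun 𝒯 L f := by
  have hS : ∀ S ∈ ConvMix 𝒯, L (S (c • f)) = c * L (S f) := fun S hS => by
    rw [map_smul_of_mem_convMix hS, hL.2.2 _ (isGamble_apply_of_mem_convMix hS hf) c hc]
  have hset : {r | ∃ S ∈ ConvMix 𝒯, r = L (S (c • f))}
      = c • {r | ∃ S ∈ ConvMix 𝒯, r = L (S f)} := by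
    ext r
    simp only [Set.mem_smul_set, Set.mem_ofPred_eq]
    constructor
    · rintro ⟨S, hS', rfl⟩
      exact ⟨_, ⟨S, hS', rfl⟩, (hS S hS').symm⟩
    · rintro ⟨_, ⟨S, hS', rfl⟩, rfl⟩
      exact ⟨S, hS', (hS S hS').symm⟩
  rw [Qfun, hset, Real.sSup_smul_of_nonneg hc, smul_eq_mul, Qfun]

variable (hL : IsCoherentLowerPrevision L) (hid : id ∈ 𝒯)
  (hweak : ∀ f : X → ℝ, IsGamble f → ∀ T ∈ 𝒯, L f ≤ L (f ∘ T))
include hL hid hweak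

theorem exists_forall_succ_Qfun_sub_lt (hf : IsGamble f) {ε : ℝ} (hε : 0 < ε) :
    ∃ S₀ ∈ ConvMix 𝒯, ∀ S, Succ 𝒯 S S₀ → Qfun 𝒯 L f - ε < L (S f) := by
  obtain ⟨_, ⟨S₀, hS₀, rfl⟩, hlt⟩ :=
    exists_lt_of_lt_csSup (Qfun_set_nonempty hid) (sub_lt_self _ hε)
  refine ⟨S₀, hS₀, ?_⟩
  rintro _ ⟨A, hA, rfl⟩
  exact hlt.trans_le
    (apply_le_apply_of_mem_convMix hL hweak hA (isGamble_apply_of_mem_convMix hS₀ hf))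

theorem exists_forall_succ_abs_sub_Qfun_lt [Nonempty X] (hf : IsGamble f) {ε : ℝ} (hε : 0 < ε) :
    ∃ S₀ ∈ ConvMix 𝒯, ∀ S ∈ ConvMix 𝒯, Succ 𝒯 S S₀ → |L (S f) - Qfun 𝒯 L f| < ε := by
  obtain ⟨S₀, hS₀, hlt⟩ := exists_forall_succ_Qfun_sub_lt hL hid hweak hf hε
  refine ⟨S₀, hS₀, fun S hS hsucc => abs_sub_lt_iff.2 ⟨?_, by linarith [hlt S hsucc]⟩⟩
  linarith [apply_le_Qfun hL hf hS]

theorem Qfun_add_le [Nonempty X] (hMS : MooreSmith 𝒯) {g : X → ℝ} (hf : IsGamble f)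
    (hg : IsGamble g) :
    Qfun 𝒯 L f + Qfun 𝒯 L g ≤ Qfun 𝒯 L (f + g) := by
  refine le_of_forall_pos_le_add fun ε hε => ?_
  obtain ⟨S₁, hS₁, h₁⟩ := exists_forall_succ_Qfun_sub_lt hL hid hweak hf (half_pos hε)
  obtain ⟨S₂, hS₂, h₂⟩ := exists_forall_succ_Qfun_sub_lt hL hid hweak hg (half_pos hε)
  obtain ⟨S, hS, hsucc₁, hsucc₂⟩ := hMS S₁ hS₁ S₂ hS₂
  have hsup := hL.2.1 _ _ (isGamble_apply_of_mem_convMix hS hf)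
    (isGamble_apply_of_mem_convMix hS hg)
  rw [← map_add_of_mem_convMix hS] at hsup
  linarith [h₁ S hsucc₁, h₂ S hsucc₂, apply_le_Qfun hL (hf.add hg) hS]

end Qfun

theorem le_of_forall_le_add_div_succ {a b C : ℝ} (h : ∀ K : ℕ, a ≤ b + C / ((K : ℝ) + 1)) :
    a ≤ b := by
  have hlim : Tendsto (fun K : ℕ => b + C * (1 / ((K : ℝ) + 1))) atTop (𝓝 (b + C * 0)) :=
    (tendsto_one_div_add_atTop_nhds_zero_nat.const_mul C).const_add b
  rw [mul_zero, add_zero] at hlim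
  exact ge_of_tendsto' hlim fun K => by rw [mul_one_div]; exact h K

section Invariance

variable {𝒯 : Set (X → X)} {L : (X → ℝ) → ℝ} {f : X → ℝ} {T : X → X}

theorem iterate_mem (h𝒯 : IsTransformationMonoid 𝒯) (hT : T ∈ 𝒯) : ∀ k : ℕ, T^[k] ∈ 𝒯
  | 0 => h𝒯.1
  | k + 1 => by rw [Function.iterate_succ']; exact h𝒯.2 T hT _ (iterate_mem h𝒯 hT k)

theorem uniformMix_iterate_sub_comp (f : X → ℝ) (T : X → X) (K : ℕ) (x : X) :
    uniformMix (fun k : Fin (K + 1) => T^[k]) (f - f ∘ T) x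
      = (f x - f (T^[K + 1] x)) / ((K : ℝ) + 1) := by
  simp only [uniformMix, Pi.sub_apply, Function.comp_apply, ← Function.iterate_succ_apply' T]
  rw [Fin.sum_univ_eq_sum_range (fun i => f (T^[i] x) - f (T^[i + 1] x)), sum_range_sub']
  rfl

variable [Nonempty X]

theorem Qfun_sub_comp_nonneg (h𝒯 : IsTransformationMonoid 𝒯) (hL : IsCoherentLowerPrevision L)
    (hf : IsGamble f) (hT : T ∈ 𝒯) : 0 ≤ Qfun 𝒯 L (f - f ∘ T) := by
  obtain ⟨M, hM⟩ := isGamble_iff_exists_abs_le.1 hf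
  refine le_of_forall_le_add_div_succ (C := 2 * M) fun K => ?_
  have hmix := uniformMix_mem_convMix (𝒯 := 𝒯) fun k : Fin (K + 1) => iterate_mem h𝒯 hT k
  have hg := hf.sub (hf.comp T)
  have hlow :
      -(2 * M) / ((K : ℝ) + 1) ≤ L (uniformMix (fun k : Fin (K + 1) => T^[k]) (f - f ∘ T)) :=
    hL.le_apply (isGamble_apply_of_mem_convMix hmix hg) fun x => by
      rw [uniformMix_iterate_sub_comp]
      gcongr
      linarith [abs_le.1 (hM x), abs_le.1 (hM (T^[K + 1] x))]
  linarith [apply_le_Qfun hL hg hmix, neg_div ((K : ℝ) + 1) (2 * M)]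

theorem Qfun_comp_sub_nonneg (h𝒯 : IsTransformationMonoid 𝒯) (hL : IsCoherentLowerPrevision L)
    (hf : IsGamble f) (hT : T ∈ 𝒯) : 0 ≤ Qfun 𝒯 L (f ∘ T - f) := by
  have h := Qfun_sub_comp_nonneg h𝒯 hL hf.neg hT
  rwa [Pi.neg_comp, sub_neg_eq_add, neg_add_eq_sub] at h

end Invariance

theorem Qfun_le_of_invariant {𝒯 : Set (X → X)} {L M : (X → ℝ) → ℝ} (hid : id ∈ 𝒯)
    (hM : IsCoherentLowerPrevision M)
    (hinv : ∀ f : X → ℝ, IsGamble f → ∀ T ∈ 𝒯, 0 ≤ M (f - f ∘ T))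
    (hLM : ∀ f : X → ℝ, IsGamble f → L f ≤ M f) {f : X → ℝ} (hf : IsGamble f) :
    Qfun 𝒯 L f ≤ M f := by
  refine Qfun_le hid fun S hS => ?_
  obtain ⟨n, w, T, hw0, hw1, hT, hrep⟩ := exists_eq_sum_smul_comp_of_mem_convMix hS
  have hSf := isGamble_apply_of_mem_convMix hS hf
  have hdiff : f - S f = ∑ k, w k • (f - f ∘ T k) := by
    rw [hrep]
    simp_rw [smul_sub, sum_sub_distrib, ← sum_smul, hw1, one_smul]
  have hdiff_nonneg : 0 ≤ M (f - S f) := hdiff ▸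
    hM.le_apply_sum_smul hw0 hw1 (fun k => hf.sub (hf.comp _)) fun k => hinv f hf _ (hT k)
  calc L (S f) ≤ M (S f) := hLM _ hSf
    _ ≤ M (S f) + M (f - S f) := le_add_of_nonneg_right hdiff_nonneg
    _ ≤ M (S f + (f - S f)) := hM.2.1 _ _ hSf (hf.sub hSf)
    _ = M f := by rw [add_sub_cancel]

theorem exists_floor_weights {ι : Type*} [Fintype ι] {w : ι → ℝ} (hw0 : ∀ i, 0 ≤ w i)
    (hw1 : ∑ i, w i = 1) (N : ℕ) :
    ∃ m : Option ι → ℕ, ∑ o, m o = N ∧ m none ≤ Fintype.card ι ∧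
      ∀ i, (m (some i) : ℝ) ≤ w i * N := by
  set m : ι → ℕ := fun i => ⌊w i * N⌋₊
  have hm_le : ∀ i, (m i : ℝ) ≤ w i * N := fun i => Nat.floor_le (by positivity [hw0 i])
  have hN : (N : ℝ) = ∑ i, w i * N := by rw [← sum_mul, hw1, one_mul]
  have hsum_le : ∑ i, m i ≤ N := by
    have : ((∑ i, m i : ℕ) : ℝ) ≤ N := by push_cast; rw [hN]; exact sum_le_sum fun i _ => hm_le i
    exact_mod_cast this
  have hle_sum : N ≤ ∑ i, m i + Fintype.card ι := by
    have : (N : ℝ) ≤ ∑ i, ((m i : ℝ) + 1) := hN ▸ sum_le_sum fun i _ => (Nat.lt_floor_add_one _).le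
    rw [sum_add_distrib] at this
    exact_mod_cast (by simpa using this : (N : ℝ) ≤ ∑ i, (m i : ℝ) + Fintype.card ι)
  refine ⟨fun o => o.elim (N - ∑ i, m i) m, ?_, ?_, hm_le⟩
  · rw [Fintype.sum_option]
    simp only [Option.elim_none, Option.elim_some]
    omega
  · simp only [Option.elim_none]
    omega

theorem exists_tuple_sum_comp_eq {ι α : Type*} [Fintype ι] (m : ι → ℕ) (a : ι → α) {N : ℕ}
    (hN : ∑ i, m i = N) :
    ∃ t : Fin N → α, (∀ j, ∃ i, t j = a i) ∧
      ∀ g : α → ℝ, ∑ j, g (t j) = ∑ i, (m i : ℝ) * g (a i) := by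
  let e : (Σ i, Fin (m i)) ≃ Fin N := Fintype.equivFinOfCardEq (by simp [hN])
  refine ⟨fun j => a (e.symm j).1, fun j => ⟨_, rfl⟩, fun g => ?_⟩
  rw [e.symm.sum_comp (fun p => g (a p.1)), Fintype.sum_sigma]
  simp

section UniformMix

variable {𝒯 : Set (X → X)}

theorem exists_uniformMix_approx (hid : id ∈ 𝒯) {S : (X → ℝ) → X → ℝ} (hS : S ∈ ConvMix 𝒯) :
    ∃ C : ℝ, ∀ K : ℕ, ∃ Ts : Fin (K + 1) → X → X, (∀ k, Ts k ∈ 𝒯) ∧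
      ∀ (f : X → ℝ) (M : ℝ), (∀ x, |f x| ≤ M) →
        ∀ x, S f x ≤ uniformMix Ts f x + C * M / ((K : ℝ) + 1) := by
  obtain ⟨n, w, T, hw0, hw1, hT, hrep⟩ := exists_eq_sum_smul_comp_of_mem_convMix hS
  refine ⟨2 * n, fun K => ?_⟩
  obtain ⟨m, hmN, hm_none, hm_some⟩ := exists_floor_weights hw0 hw1 (K + 1)
  obtain ⟨Ts, hTs, hsum⟩ := exists_tuple_sum_comp_eq m (fun o => o.elim id T) hmN
  refine ⟨Ts, fun j => ?_, fun f M hM x => ?_⟩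
  · obtain ⟨_ | i, ho⟩ := hTs j
    exacts [ho ▸ hid, ho ▸ hT i]
  have hM0 : 0 ≤ M := (abs_nonneg _).trans (hM x)
  have hmsum : (m none : ℝ) + ∑ i, (m (some i) : ℝ) = K + 1 := by
    exact_mod_cast (Fintype.sum_option m).symm.trans hmN
  have hn : (m none : ℝ) ≤ n := by simpa using (Nat.cast_le (α := ℝ)).2 hm_none
  -- rounding down leaves the weights `w i * (K + 1) - m (some i) ≥ 0`, of total mass `m none`
  have hrest : ∑ i, (w i * (K + 1) - m (some i)) * f (T i x) ≤ m none * M :=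
    calc ∑ i, (w i * (K + 1) - m (some i)) * f (T i x)
        ≤ ∑ i, (w i * (K + 1) - m (some i)) * M :=
          sum_le_sum fun i _ => mul_le_mul_of_nonneg_left (abs_le.1 (hM _)).2
            (sub_nonneg.2 (by exact_mod_cast hm_some i))
      _ = m none * M := by rw [← sum_mul, sum_sub_distrib, ← sum_mul, hw1]; congr 1; linarith
  have hx : -(m none * f x) ≤ m none * M := by
    nlinarith [abs_le.1 (hM x), (m none).cast_nonneg (α := ℝ)]
  have hexpand : S f x * (K + 1) = ∑ i, (w i * (K + 1) - m (some i)) * f (T i x)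
      + ∑ i, (m (some i) : ℝ) * f (T i x) := by
    rw [hrep, ← sum_add_distrib]
    simp only [Finset.sum_apply, Pi.smul_apply, Function.comp_apply, smul_eq_mul, sum_mul]
    exact sum_congr rfl fun i _ => by ring
  have hK : (0 : ℝ) < K + 1 := by positivity
  rw [uniformMix, ← add_div, le_div_iff₀ hK, hsum (fun T => f (T x)),
    Fintype.sum_option]
  simp only [Option.elim_none, Option.elim_some, id]
  linarith [mul_le_mul_of_nonneg_right hn hM0]

theorem Qfun_eq_sSup_uniformMix [Nonempty X] {L : (X → ℝ) → ℝ} (hL : IsCoherentLowerPrevision L)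
    (hid : id ∈ 𝒯) {f : X → ℝ} (hf : IsGamble f) :
    Qfun 𝒯 L f = sSup {r | ∃ (n : ℕ) (Ts : Fin (n + 1) → X → X),
      (∀ k, Ts k ∈ 𝒯) ∧ r = L (uniformMix Ts f)} := by
  set U := {r | ∃ (n : ℕ) (Ts : Fin (n + 1) → X → X), (∀ k, Ts k ∈ 𝒯) ∧ r = L (uniformMix Ts f)}
  have hU : U ⊆ {r | ∃ S ∈ ConvMix 𝒯, r = L (S f)} := by
    rintro _ ⟨n, Ts, hTs, rfl⟩
    exact ⟨_, uniformMix_mem_convMix hTs, rfl⟩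
  have hU_ne : U.Nonempty := ⟨_, 0, fun _ => id, fun _ => hid, rfl⟩
  refine le_antisymm (Qfun_le hid fun S hS => ?_)
    (csSup_le hU_ne fun r hr => le_csSup (bddAbove_Qfun_set hL hf) (hU hr))
  obtain ⟨M, hM⟩ := isGamble_iff_exists_abs_le.1 hf
  obtain ⟨C, hC⟩ := exists_uniformMix_approx hid hS
  refine le_of_forall_le_add_div_succ (C := C * M) fun K => ?_
  obtain ⟨Ts, hTs, happrox⟩ := hC K
  calc L (S f) ≤ L (uniformMix Ts f) + C * M / ((K : ℝ) + 1) :=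
        hL.apply_le_add (isGamble_apply_of_mem_convMix hS hf)
          (isGamble_apply_of_mem_convMix (uniformMix_mem_convMix hTs) hf) (happrox f M hM)
    _ ≤ sSup U + C * M / ((K : ℝ) + 1) := by
        gcongr
        exact le_csSup ((bddAbove_Qfun_set hL hf).mono hU) ⟨K, Ts, hTs, rfl⟩

end UniformMix

end

theorem stmt10 (X : Type*) [Nonempty X] (𝒯 : Set (X → X))
    (h𝒯 : IsTransformationMonoid 𝒯) (hMS : MooreSmith 𝒯)
    (L : (X → ℝ) → ℝ) (hL : IsCoherentLowerPrevision L)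
    (hweak : ∀ f : X → ℝ, IsGamble f → ∀ T ∈ 𝒯, L f ≤ L (f ∘ T)) :
    (∀ f : X → ℝ, IsGamble f → ∀ ε : ℝ, 0 < ε → ∃ S₀ ∈ ConvMix 𝒯,
        ∀ S ∈ ConvMix 𝒯, Succ 𝒯 S S₀ → |L (S f) - Qfun 𝒯 L f| < ε) ∧
    (∀ f : X → ℝ, IsGamble f →
        Qfun 𝒯 L f = sSup {r : ℝ | ∃ (n : ℕ) (Ts : Fin (n+1) → X → X),
          (∀ k, Ts k ∈ 𝒯) ∧
          r = L (fun x => (∑ k, f (Ts k x)) / ((n : ℝ) + 1))}) ∧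
    IsCoherentLowerPrevision (Qfun 𝒯 L) ∧
    (∀ f : X → ℝ, IsGamble f → ∀ T ∈ 𝒯,
        0 ≤ Qfun 𝒯 L (f - f ∘ T) ∧ 0 ≤ Qfun 𝒯 L (f ∘ T - f)) ∧
    (∀ f : X → ℝ, IsGamble f → L f ≤ Qfun 𝒯 L f) ∧
    (∀ M : (X → ℝ) → ℝ, IsCoherentLowerPrevision M →
      (∀ f : X → ℝ, IsGamble f → ∀ T ∈ 𝒯,
        0 ≤ M (f - f ∘ T) ∧ 0 ≤ M (f ∘ T - f)) →
      (∀ f : X → ℝ, IsGamble f → L f ≤ M f) →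
      ∀ f : X → ℝ, IsGamble f → Qfun 𝒯 L f ≤ M f) := by
  have hid : id ∈ 𝒯 := h𝒯.1
  have hQ : IsCoherentLowerPrevision (Qfun 𝒯 L) :=
    ⟨fun f hf => (hL.1 f hf).trans (le_Qfun hL hid hf),
      fun f g hf hg => Qfun_add_le hL hid hweak hMS hf hg,
      fun f hf c hc => Qfun_smul hL hf hc⟩
  exact ⟨fun f hf ε hε => exists_forall_succ_abs_sub_Qfun_lt hL hid hweak hf hε,
    fun f hf => Qfun_eq_sSup_uniformMix hL hid hf,
    hQ,
    fun f hf T hT => ⟨Qfun_sub_comp_nonneg h𝒯 hL hf hT, Qfun_comp_sub_nonneg h𝒯 hL hf hT⟩,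
    fun f hf => le_Qfun hL hid hf,
    fun M hM hinv hLM f hf =>
      Qfun_le_of_invariant hid hM (fun g hg T hT => (hinv g hg T hT).1) hLM hf⟩
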